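/- Suppose f and (f_j)_{j≥1} are sequences ℕ → ℝ such that f_j → f pointwise as j → ∞. Then, in [0,∞], ‖f‖_𝔹 ≤ liminf_{j→∞} (6·‖f_j‖_{1,∞} + ‖f_j‖_𝔹). -/

import Mathlib

open Filter ENNReal
open scoped Classical

noncomputable section

/-- Coordinate projection onto a finite set of indices. -/
def proj (A : Finset ℕ) (f : ℕ → ℝ) : ℕ → ℝ := fun n => if n ∈ A then f n else 0

/-- Coordinate projection onto a set of indices. -/
def projSet (A : Set ℕ) (f : ℕ → ℝ) : ℕ → ℝ := fun n => if n ∈ A then f n else 0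

/-- `𝟙*_A(f) = ∑_{n ∈ A} f n`. -/
def oneStar (f : ℕ → ℝ) (A : Finset ℕ) : ℝ := ∑ n ∈ A, f n

/-- `A` is a greedy set of `f`. -/
def GreedySet (f : ℕ → ℝ) (A : Finset ℕ) : Prop :=
  ∀ n ∈ A, ∀ k, k ∉ A → |f k| ≤ |f n|

/-- `β(f,A) = sup_{I ∈ ℐ} |𝟙*_{I∖A}(f)| ∈ [0,∞]`, the sup running over all finite
integer intervals `I = [a,b]`. -/
def beta (f : ℕ → ℝ) (A : Finset ℕ) : ℝ≥0∞ :=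
  ⨆ a : ℕ, ⨆ b : ℕ, ENNReal.ofReal |oneStar f (Finset.Icc a b \ A)|

/-- `‖f‖_𝔹 = sup_{A ∈ 𝒢(f)} β(f,A) ∈ [0,∞]`. -/
def BNorm (f : ℕ → ℝ) : ℝ≥0∞ :=
  ⨆ A ∈ {A : Finset ℕ | GreedySet f A}, beta f A

/-- Membership in `𝔹`, i.e. `‖f‖_𝔹 < ∞`. -/
def MemB (f : ℕ → ℝ) : Prop := BNorm f < ⊤

/-- Membership in `c₀`. -/
def Memc0 (f : ℕ → ℝ) : Prop := Tendsto f atTop (nhds 0)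

/-- Membership in `𝔹₀`. -/
def MemB0 (f : ℕ → ℝ) : Prop :=
  Memc0 f ∧ ∀ ε : ℝ, 0 < ε → ∃ A : Finset ℕ, GreedySet f A ∧
    ∀ B : Finset ℕ, GreedySet f B → A ⊆ B → beta f B < ENNReal.ofReal ε

/-- The net `(𝟙*_A(f))_{A ∈ 𝒢(f)}`, directed by inclusion, converges to `s`. -/
def GreedyLim (f : ℕ → ℝ) (s : ℝ) : Prop :=
  ∀ ε : ℝ, 0 < ε → ∃ A : Finset ℕ, GreedySet f A ∧
    ∀ B : Finset ℕ, GreedySet f B → A ⊆ B → |oneStar f B - s| < ε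

/-- Membership in `𝔸`. -/
def MemA (f : ℕ → ℝ) : Prop := Memc0 f ∧ ∃ s, GreedyLim f s

/-- `σ_g(f)`, the greedy sum of `f` (junk value `0` if the greedy net does not converge). -/
def sigmaG (f : ℕ → ℝ) : ℝ := if h : ∃ s, GreedyLim f s then h.choose else 0

/-- `‖f‖_𝔸 = sup_{A ∈ 𝒢(f)} |σ_g(f) - 𝟙*_A(f)|`. -/
def ANorm (f : ℕ → ℝ) : ℝ≥0∞ :=
  ⨆ A ∈ {A : Finset ℕ | GreedySet f A}, ENNReal.ofReal |sigmaG f - oneStar f A|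

/-- The series `∑_n f n` converges (in the ordered sense) to `s`. -/
def SeriesLim (f : ℕ → ℝ) (s : ℝ) : Prop :=
  Tendsto (fun m => ∑ n ∈ Finset.range m, f n) atTop (nhds s)

/-- Membership in `𝒔`: the series `∑_n f n` converges. -/
def MemSeries (f : ℕ → ℝ) : Prop := ∃ s, SeriesLim f s

/-- `σ_s(f) = ∑_{n=0}^∞ f n` (junk value `0` if the series does not converge). -/
def sigmaS (f : ℕ → ℝ) : ℝ := if h : ∃ s, SeriesLim f s then h.choose else 0

/-- `‖f‖_𝒔 = sup_m |∑_{n = m}^∞ f n|`, expressed via `σ_s(f)` minus partial sums. -/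
def sNorm (f : ℕ → ℝ) : ℝ≥0∞ :=
  ⨆ m : ℕ, ENNReal.ofReal |sigmaS f - ∑ n ∈ Finset.range m, f n|

/-- `D(f)(m)`: the `m`-th term (for `m ≥ 1`) of the nonincreasing rearrangement of `|f|`,
as an element of `[0,∞]`. -/
def Drearr (f : ℕ → ℝ) (m : ℕ) : ℝ≥0∞ :=
  sInf {t : ℝ≥0∞ | {n : ℕ | t < ENNReal.ofReal |f n|}.Finite ∧
    {n : ℕ | t < ENNReal.ofReal |f n|}.ncard < m}

/-- `ρ_{1,∞}(f,k) = sup_{m ≥ 1} m · D(f)(m+k) ∈ [0,∞]`. Note `ρ_{1,∞}(f,0) = ‖f‖_{1,∞}`. -/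
def rho (f : ℕ → ℝ) (k : ℕ) : ℝ≥0∞ :=
  ⨆ m : ℕ, ⨆ _ : 1 ≤ m, (m : ℝ≥0∞) * Drearr f (m + k)

/-- Membership in `h_{1,∞}`: `lim_m m · D(f)(m) = 0`. -/
def Memh1inf (f : ℕ → ℝ) : Prop :=
  Tendsto (fun m : ℕ => (m : ℝ≥0∞) * Drearr f m) atTop (nhds 0)

/-- A sequence of nonempty finite integer intervals which is right-dominant:
`max J_k < min J_{k+1}` for all `k`. -/
def RightDominant (J : ℕ → Finset ℕ) : Prop :=
  (∀ k : ℕ, ∃ a b : ℕ, a ≤ b ∧ J k = Finset.Icc a b) ∧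
  ∀ k : ℕ, ∀ n ∈ J k, ∀ m ∈ J (k + 1), n < m

/-- `g` is Leibnizian with admissible sequence `J`. -/
def Admissible (g : ℕ → ℝ) (J : ℕ → Finset ℕ) : Prop :=
  RightDominant J ∧
  (∀ n : ℕ, g n ≠ 0 → ∃ k, n ∈ J k) ∧
  (∀ k : ℕ, oneStar g (J (k + 1)) ≤ oneStar g (J k)) ∧
  (∀ k : ℕ, ∀ n ∈ J k, g n ≠ 0 → ∀ m ∈ J (k + 1), g m < g n)

end

/-! Fix a greedy set `A` of `f` and an interval `I`. On the finite set `I`, `f_j` is uniformly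
close to `f`, so `A` is greedy for `f_j` on `I` up to an error `δ`. Let `t = min_{A ∩ I} |f_j|`
and let `B = {n : |f_j n| > t + δ}`, a greedy set of `f_j`. Then `B ∩ I ⊆ A`, and `I ∖ A` is
`I ∖ B` with the points of `(A ∩ I) ∖ B` removed; there are at most `p = #(A ∩ I)` of these, each
of size at most `t + δ`, while `p · t ≤ p · D(f_j)(p) ≤ ‖f_j‖_{1,∞}`. Hence
`|𝟙*_{I∖A}(f_j)| ≤ ‖f_j‖_𝔹 + ‖f_j‖_{1,∞} + p δ`; if `B` is infinite then `‖f_j‖_{1,∞} = ∞`.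
Letting `j → ∞` and then `δ → 0` gives the claim. -/

open Filter ENNReal Topology

section

variable {g : ℕ → ℝ}

lemma ofReal_abs_oneStar_le_beta (g : ℕ → ℝ) (A : Finset ℕ) (a b : ℕ) :
    ENNReal.ofReal |oneStar g (Finset.Icc a b \ A)| ≤ beta g A :=
  le_iSup₂ (f := fun a b => ENNReal.ofReal |oneStar g (Finset.Icc a b \ A)|) a b

lemma beta_le_BNorm {A : Finset ℕ} (hA : GreedySet g A) : beta g A ≤ BNorm g :=
  le_iSup₂ (f := fun A (_ : GreedySet g A) => beta g A) A hA

lemma greedySet_empty (g : ℕ → ℝ) : GreedySet g ∅ := by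
  simp [GreedySet]

lemma greedySet_toFinset_lt_abs {c : ℝ} (hfin : {n | c < |g n|}.Finite) :
    GreedySet g hfin.toFinset := by
  intro n hn k hk
  simp only [Set.Finite.mem_toFinset, Set.mem_ofPred_eq] at hn hk
  exact (not_lt.1 hk).trans hn.le

lemma natCast_mul_Drearr_le_rho {m : ℕ} (hm : 1 ≤ m) : (m : ℝ≥0∞) * Drearr g m ≤ rho g 0 :=
  le_iSup₂ (f := fun (m : ℕ) (_ : 1 ≤ m) => (m : ℝ≥0∞) * Drearr g (m + 0)) m hm

lemma ofReal_le_Drearr_card {S : Finset ℕ} {t : ℝ} (hS : ∀ n ∈ S, t ≤ |g n|) :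
    ENNReal.ofReal t ≤ Drearr g S.card := by
  refine le_sInf fun s ⟨hfin, hcard⟩ => not_lt.1 fun hst => ?_
  have hsub : (S : Set ℕ) ⊆ {n | s < ENNReal.ofReal |g n|} := fun n hn =>
    hst.trans_le (ENNReal.ofReal_le_ofReal (hS n hn))
  have := Set.ncard_le_ncard hsub hfin
  rw [Set.ncard_coe_finset] at this
  omega

lemma card_mul_ofReal_le_rho {S : Finset ℕ} {t : ℝ} (hS : ∀ n ∈ S, t ≤ |g n|) :
    (S.card : ℝ≥0∞) * ENNReal.ofReal t ≤ rho g 0 := by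
  rcases Nat.eq_zero_or_pos S.card with h0 | hpos
  · simp [h0]
  · exact (mul_le_mul_right (ofReal_le_Drearr_card hS) _).trans (natCast_mul_Drearr_le_rho hpos)

lemma ofReal_le_Drearr_of_infinite {c : ℝ} (hinf : {n | c < |g n|}.Infinite) (m : ℕ) :
    ENNReal.ofReal c ≤ Drearr g m :=
  le_sInf fun _ ⟨hfin, _⟩ => not_lt.1 fun hsc =>
    hinf (hfin.subset fun _ hn => hsc.trans_le (ENNReal.ofReal_le_ofReal (le_of_lt hn)))

lemma rho_eq_top_of_infinite {c : ℝ} (hc : 0 < c) (hinf : {n | c < |g n|}.Infinite) :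
    rho g 0 = ⊤ := by
  have hbound : ∀ m : ℕ, (m : ℝ≥0∞) * ENNReal.ofReal c ≤ rho g 0 := by
    intro m
    rcases Nat.eq_zero_or_pos m with rfl | hm
    · simp
    · exact (mul_le_mul_right (ofReal_le_Drearr_of_infinite hinf m) _).trans
        (natCast_mul_Drearr_le_rho hm)
  refine top_unique ?_
  calc (⊤ : ℝ≥0∞) = (⨆ m : ℕ, (m : ℝ≥0∞)) * ENNReal.ofReal c := by
        rw [ENNReal.iSup_natCast, ENNReal.top_mul (ENNReal.ofReal_pos.2 hc).ne']
    _ = ⨆ m : ℕ, (m : ℝ≥0∞) * ENNReal.ofReal c := ENNReal.iSup_mul _ _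
    _ ≤ rho g 0 := iSup_le hbound

lemma ofReal_abs_oneStar_sdiff_le_BNorm_add {A : Finset ℕ} {a b : ℕ} {c : ℝ} (hc : 0 ≤ c)
    (hfin : {n | c < |g n|}.Finite) (hle : ∀ k ∈ Finset.Icc a b \ A, |g k| ≤ c) :
    ENNReal.ofReal |oneStar g (Finset.Icc a b \ A)| ≤
      BNorm g + ENNReal.ofReal ((A ∩ Finset.Icc a b).card * c) := by
  set I := Finset.Icc a b
  set B := hfin.toFinset
  have hB : ∀ n, n ∈ B ↔ c < |g n| := fun n => by simp [B]
  have hsub : I \ A ⊆ I \ B := fun n hn =>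
    Finset.mem_sdiff.2 ⟨(Finset.mem_sdiff.1 hn).1, fun hnB => ((hB n).1 hnB).not_ge (hle n hn)⟩
  have hrest : (I \ B) \ (I \ A) ⊆ A ∩ I := fun n hn => by
    simp only [Finset.mem_sdiff, Finset.mem_inter] at hn ⊢
    tauto
  have hsmall : ∀ n ∈ (I \ B) \ (I \ A), |g n| ≤ c := fun n hn =>
    not_lt.1 fun h => (Finset.mem_sdiff.1 (Finset.mem_sdiff.1 hn).1).2 ((hB n).2 h)
  have hreal : |oneStar g (I \ A)| ≤ |oneStar g (I \ B)| + (A ∩ I).card * c := by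
    have hsplit := Finset.sum_sdiff hsub (f := g)
    have hrest_le : |∑ n ∈ (I \ B) \ (I \ A), g n| ≤ (A ∩ I).card * c :=
      calc |∑ n ∈ (I \ B) \ (I \ A), g n| ≤ ∑ n ∈ (I \ B) \ (I \ A), |g n| :=
            Finset.abs_sum_le_sum_abs _ _
        _ ≤ ((I \ B) \ (I \ A)).card * c := by
            simpa using Finset.sum_le_sum hsmall
        _ ≤ (A ∩ I).card * c := by gcongr
    have hdiff : oneStar g (I \ A) = oneStar g (I \ B) - ∑ n ∈ (I \ B) \ (I \ A), g n := by
      unfold oneStar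
      linarith
    rw [hdiff]
    exact (abs_sub _ _).trans (by linarith)
  calc ENNReal.ofReal |oneStar g (I \ A)|
      ≤ ENNReal.ofReal |oneStar g (I \ B)| + ENNReal.ofReal ((A ∩ I).card * c) := by
        rw [← ENNReal.ofReal_add (abs_nonneg _) (by positivity)]
        exact ENNReal.ofReal_le_ofReal hreal
    _ ≤ BNorm g + ENNReal.ofReal ((A ∩ I).card * c) := by
        gcongr
        exact (ofReal_abs_oneStar_le_beta g B a b).trans
          (beta_le_BNorm (greedySet_toFinset_lt_abs hfin))

lemma ofReal_abs_oneStar_sdiff_le_rho_add_BNorm_add {A : Finset ℕ} {a b : ℕ} {δ : ℝ} (hδ : 0 < δ)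
    (hA : ∀ k ∈ Finset.Icc a b \ A, ∀ n ∈ A ∩ Finset.Icc a b, |g k| ≤ |g n| + δ) :
    ENNReal.ofReal |oneStar g (Finset.Icc a b \ A)| ≤
      rho g 0 + BNorm g + ENNReal.ofReal ((A ∩ Finset.Icc a b).card * δ) := by
  set I := Finset.Icc a b
  rcases (A ∩ I).eq_empty_or_nonempty with hempty | hne
  · have hIA : I \ A = I \ ∅ := by
      rw [Finset.sdiff_empty, Finset.sdiff_eq_self_of_disjoint
        (Finset.disjoint_iff_inter_eq_empty.2 hempty).symm]
    calc ENNReal.ofReal |oneStar g (I \ A)| ≤ BNorm g := by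
          rw [hIA]
          exact (ofReal_abs_oneStar_le_beta g ∅ a b).trans (beta_le_BNorm (greedySet_empty g))
      _ ≤ _ := le_add_right le_add_self
  obtain ⟨n₀, hn₀, ht⟩ := Finset.exists_mem_eq_inf' hne (fun n => |g n|)
  set t := (A ∩ I).inf' hne (fun n => |g n|)
  have htle : ∀ n ∈ A ∩ I, t ≤ |g n| := fun n hn => Finset.inf'_le _ hn
  have ht0 : 0 ≤ t := ht ▸ abs_nonneg _
  by_cases hfin : {n | t + δ < |g n|}.Finite
  · have hle : ∀ k ∈ I \ A, |g k| ≤ t + δ := fun k hk => ht ▸ hA k hk n₀ hn₀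
    calc ENNReal.ofReal |oneStar g (I \ A)|
        ≤ BNorm g + ENNReal.ofReal ((A ∩ I).card * (t + δ)) :=
          ofReal_abs_oneStar_sdiff_le_BNorm_add (by positivity) hfin hle
      _ = BNorm g + ((A ∩ I).card * ENNReal.ofReal t + ENNReal.ofReal ((A ∩ I).card * δ)) := by
          rw [mul_add, ENNReal.ofReal_add (by positivity) (by positivity),
            ENNReal.ofReal_mul (by positivity), ENNReal.ofReal_natCast]
      _ ≤ BNorm g + (rho g 0 + ENNReal.ofReal ((A ∩ I).card * δ)) := by
          gcongr
          exact card_mul_ofReal_le_rho htle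
      _ = rho g 0 + BNorm g + ENNReal.ofReal ((A ∩ I).card * δ) := by ring
  · rw [rho_eq_top_of_infinite (by positivity) hfin]
    simp

end

lemma abs_le_abs_add_of_greedySet {f g : ℕ → ℝ} {A : Finset ℕ} (hA : GreedySet f A) {k n : ℕ}
    (hk : k ∉ A) (hn : n ∈ A) {ε : ℝ} (hgk : |g k - f k| < ε) (hgn : |g n - f n| < ε) :
    |g k| ≤ |g n| + 2 * ε := by
  have := hA n hn k hk
  have := abs_sub_abs_le_abs_sub (g k) (f k)
  have := abs_sub_abs_le_abs_sub (f n) (g n)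
  rw [abs_sub_comm] at this
  linarith

lemma ofReal_abs_oneStar_sdiff_le_of_greedySet {f g : ℕ → ℝ} {A : Finset ℕ} (hA : GreedySet f A)
    {a b : ℕ} {ε : ℝ} (hε : 0 < ε) (hclose : ∀ n ∈ Finset.Icc a b, |g n - f n| < ε) :
    ENNReal.ofReal |oneStar g (Finset.Icc a b \ A)| ≤
      rho g 0 + BNorm g + ENNReal.ofReal ((A ∩ Finset.Icc a b).card * (2 * ε)) :=
  ofReal_abs_oneStar_sdiff_le_rho_add_BNorm_add (by positivity) fun k hk n hn =>
    abs_le_abs_add_of_greedySet hA (Finset.mem_sdiff.1 hk).2 (Finset.mem_inter.1 hn).1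
      (hclose k (Finset.mem_sdiff.1 hk).1) (hclose n (Finset.mem_inter.1 hn).2)

lemma le_liminf_of_forall_pos_eventually_le_add {x : ℝ≥0∞} {u : ℕ → ℝ≥0∞} (C : ℝ)
    (h : ∀ ε : ℝ, 0 < ε → ∀ᶠ j in atTop, x ≤ u j + ENNReal.ofReal (C * ε)) :
    x ≤ liminf u atTop := by
  have hlim : Tendsto (fun ε => liminf u atTop + ENNReal.ofReal (C * ε)) (𝓝[>] 0)
      (𝓝 (liminf u atTop)) := by
    have : Continuous fun ε => liminf u atTop + ENNReal.ofReal (C * ε) :=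
      continuous_const.add (ENNReal.continuous_ofReal.comp (continuous_const.mul continuous_id))
    simpa using (this.tendsto 0).mono_left nhdsWithin_le_nhds
  refine ge_of_tendsto hlim (eventually_nhdsWithin_of_forall fun ε hε => ?_)
  rw [← tsub_le_iff_right]
  exact le_liminf_of_le (by isBoundedDefault)
    ((h ε hε).mono fun j hj => tsub_le_iff_right.2 hj)

/-- if `f_j → f` pointwise, then
`‖f‖_𝔹 ≤ liminf_j (6·‖f_j‖_{1,∞} + ‖f_j‖_𝔹)` in `[0,∞]`. -/
theorem stmt_11 (f : ℕ → ℝ) (fj : ℕ → ℕ → ℝ)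
    (h : ∀ n, Filter.Tendsto (fun j => fj j n) Filter.atTop (nhds (f n))) :
    BNorm f ≤ Filter.liminf (fun j => 6 * rho (fj j) 0 + BNorm (fj j)) Filter.atTop := by
  refine iSup₂_le fun A hA => iSup₂_le fun a b => ?_
  set I := Finset.Icc a b
  refine le_liminf_of_forall_pos_eventually_le_add (2 * (A ∩ I).card + 1) fun ε hε => ?_
  have hsum : Tendsto (fun j => oneStar (fj j) (I \ A)) atTop (𝓝 (oneStar f (I \ A))) :=
    tendsto_finsetSum _ fun n _ => h n
  have hclose : ∀ᶠ j in atTop, ∀ n ∈ I, |fj j n - f n| < ε :=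
    (Finset.eventually_all _).2 fun n _ => by
      simpa [Real.dist_eq] using Metric.tendsto_nhds.1 (h n) ε hε
  filter_upwards [Metric.tendsto_nhds.1 hsum ε hε, hclose] with j hsumj hclosej
  rw [Real.dist_eq] at hsumj
  calc ENNReal.ofReal |oneStar f (I \ A)|
      ≤ ENNReal.ofReal |oneStar (fj j) (I \ A)| + ENNReal.ofReal ε := by
        rw [← ENNReal.ofReal_add (abs_nonneg _) hε.le]
        refine ENNReal.ofReal_le_ofReal ?_
        have := abs_sub_abs_le_abs_sub (oneStar f (I \ A)) (oneStar (fj j) (I \ A))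
        rw [abs_sub_comm] at this
        linarith
    _ ≤ rho (fj j) 0 + BNorm (fj j) + ENNReal.ofReal ((A ∩ I).card * (2 * ε))
        + ENNReal.ofReal ε :=
          add_le_add_left (ofReal_abs_oneStar_sdiff_le_of_greedySet hA hε hclosej) _
    _ ≤ 6 * rho (fj j) 0 + BNorm (fj j) + ENNReal.ofReal ((2 * (A ∩ I).card + 1) * ε) := by
        rw [add_assoc, ← ENNReal.ofReal_add (by positivity) hε.le]
        gcongr
        · exact le_mul_of_one_le_left zero_le (by norm_num)
        · exact le_of_eq (by ring)
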